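/- arXiv:math/0105091 — 2 statements merged into one kernel-verified Lean document; each statement's English description precedes it below -/
import Mathlib

section
/- Let n be a positive integer and let f : (ℝ_{>0})^n → (ℝ_{>0})^n be a homogeneous, monotone function whose recession function f̂ exists (i.e. for every x ∈ (ℝ_{>0})^n the limit f̂(x) = lim_{k→∞} f(x_1^k,…,x_n^k)^{1/k} exists, the k-th root taken componentwise). Suppose the only eigenvectors of f̂ in (ℝ_{>0})^n are the positive scalar multiples of the all-ones vector (i.e. f̂(x) = λx with λ > 0 implies x = c·(1,…,1) for some c > 0). Then for all λ, μ > 0 the slice space S^λ_μ(f) is bounded in the Hilbert projective metric (i.e. has finite d_H-diameter). -/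
open Filter

/-- Hilbert's projective metric on the positive cone:
`d_H(y,z) = max_i log(y_i/z_i) - min_i log(y_i/z_i)`. -/
noncomputable def dH {n : ℕ} (y z : Fin n → ℝ) : ℝ :=
  (⨆ i, Real.log (y i / z i)) - (⨅ i, Real.log (y i / z i))

/-!
In logarithmic coordinates `f` becomes `G = log ∘ f ∘ exp`, which is monotone and commutes with
adding constant vectors, hence is 1-Lipschitz for the sup norm; the slice `S^λ_μ(f)` is mapped into
`{u | ‖G u - u‖ ≤ C}`. If that set had unbounded oscillation, shift its points `u_m` to minimum `0`,
divide by integers `k_m ≈ max u_m` and extract a limit `V` of oscillation at least `1/2`. Since `G`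
is 1-Lipschitz, `G (k_m • V) / k_m → V`, i.e. `exp ∘ V` is a fixed point of `f̂`; rigidity makes it
constant, a contradiction.
-/

open Topology

section

variable {ι : Type*} [Fintype ι]

theorem lipschitzWith_one_of_monotone_of_add_const {G : (ι → ℝ) → ι → ℝ} (hmono : Monotone G)
    (hadd : ∀ u (c : ℝ), G (u + fun _ => c) = G u + fun _ => c) : LipschitzWith 1 G := by
  have upper : ∀ u w i, G u i - G w i ≤ dist u w := by
    intro u w i
    have hle : u ≤ w + fun _ => dist u w := fun l => by
      have hl := dist_le_pi_dist u w l
      rw [Real.dist_eq] at hl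
      simp only [Pi.add_apply]
      linarith [le_abs_self (u l - w l)]
    have hGle := hmono hle i
    rw [hadd, Pi.add_apply] at hGle
    linarith
  refine LipschitzWith.of_dist_le_mul fun u w => ?_
  rw [NNReal.coe_one, one_mul, dist_pi_le_iff dist_nonneg]
  intro i
  rw [Real.dist_eq, abs_sub_le_iff]
  exact ⟨upper u w i, dist_comm u w ▸ upper w u i⟩

theorem exists_nonneg_le_of_unbounded_spread {S : Set (ι → ℝ)}
    (hS : ∀ u ∈ S, ∀ c : ℝ, (u + fun _ => c) ∈ S)
    (hunb : ∀ M, 0 ≤ M → ∃ u ∈ S, ∃ i j, M < u i - u j) {M : ℝ} (hM : 0 ≤ M) :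
    ∃ w ∈ S, ∃ i j, M < w i ∧ w j = 0 ∧ ∀ l, 0 ≤ w l ∧ w l ≤ w i := by
  obtain ⟨u, hu, i, j, hij⟩ := hunb M hM
  have : Nonempty ι := ⟨i⟩
  obtain ⟨imax, himax⟩ := Finite.exists_max u
  obtain ⟨jmin, hjmin⟩ := Finite.exists_min u
  refine ⟨u + fun _ => -u jmin, hS u hu _, imax, jmin, ?_, ?_, fun l => ⟨?_, ?_⟩⟩ <;>
    simp only [Pi.add_apply]
  · linarith [himax i, hjmin j]
  · ring
  · linarith [hjmin l]
  · linarith [himax l]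

theorem exists_tendsto_inv_smul_of_unbounded_spread {S : Set (ι → ℝ)}
    (hS : ∀ u ∈ S, ∀ c : ℝ, (u + fun _ => c) ∈ S)
    (hunb : ∀ M, 0 ≤ M → ∃ u ∈ S, ∃ i j, M < u i - u j) :
    ∃ (w : ℕ → ι → ℝ) (k : ℕ → ℕ) (V : ι → ℝ) (i j : ι), (∀ m, w m ∈ S) ∧
      Tendsto k atTop atTop ∧ Tendsto (fun m => (k m : ℝ)⁻¹ • w m) atTop (𝓝 V) ∧ V i ≠ V j := by
  choose w hwS i j hwi hwj hw using
    fun m : ℕ => exists_nonneg_le_of_unbounded_spread hS hunb (M := m + 1) (by positivity)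
  -- integer scales, because `f̂` is a limit along `ℕ`
  set k : ℕ → ℕ := fun m => ⌈w m (i m)⌉₊
  have hk_ge (m : ℕ) : w m (i m) ≤ k m := Nat.le_ceil _
  have hk_lt (m : ℕ) : (k m : ℝ) < 2 * w m (i m) := Nat.ceil_lt_two_mul (by linarith [hwi m])
  have hk_pos (m : ℕ) : (0 : ℝ) < k m := by linarith [hk_ge m, hwi m]
  set v : ℕ → ι → ℝ := fun m => (k m : ℝ)⁻¹ • w m
  have hv (m : ℕ) : v m ∈ Set.Icc 0 1 := by
    refine ⟨fun l => ?_, fun l => ?_⟩ <;> simp only [v, Pi.smul_apply, smul_eq_mul, inv_mul_eq_div]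
    · exact div_nonneg (hw m l).1 (hk_pos m).le
    · exact (div_le_one (hk_pos m)).mpr ((hw m l).2.trans (hk_ge m))
  have hgap (m : ℕ) : 1 / 2 < v m (i m) - v m (j m) := by
    simp only [v, Pi.smul_apply, smul_eq_mul, inv_mul_eq_div, hwj m, zero_div, sub_zero]
    rw [lt_div_iff₀ (hk_pos m)]
    linarith [hk_lt m]
  obtain ⟨V, -, φ, hφ, hlim⟩ := isCompact_Icc.tendsto_subseq hv
  have hk_top : Tendsto k atTop atTop := by
    refine tendsto_atTop_mono (fun m => ?_) tendsto_id
    exact_mod_cast (show (m : ℝ) ≤ k m by linarith [hwi m, hk_ge m])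
  obtain ⟨m, hm⟩ := (hlim.eventually (Metric.ball_mem_nhds V (by norm_num : (0 : ℝ) < 1 / 4))).exists
  refine ⟨w ∘ φ, k ∘ φ, V, i (φ m), j (φ m), fun m => hwS (φ m), hk_top.comp hφ.tendsto_atTop,
    hlim, fun hVij => ?_⟩
  have hi := (dist_le_pi_dist (v (φ m)) V (i (φ m))).trans_lt hm
  have hj := (dist_le_pi_dist (v (φ m)) V (j (φ m))).trans_lt hm
  rw [Real.dist_eq, abs_lt] at hi hj
  linarith [hgap (φ m)]

end

theorem LipschitzWith.tendsto_inv_smul_apply_smul {E α : Type*} [NormedAddCommGroup E]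
    [NormedSpace ℝ E] {G : E → E} (hG : LipschitzWith 1 G) {l : Filter α} {C : ℝ} {w : α → E}
    (hw : ∀ a, ‖G (w a) - w a‖ ≤ C) {s : α → ℝ} (hs : Tendsto s l atTop) {V : E}
    (hV : Tendsto (fun a => (s a)⁻¹ • w a) l (𝓝 V)) :
    Tendsto (fun a => (s a)⁻¹ • G (s a • V)) l (𝓝 V) := by
  rw [tendsto_iff_norm_sub_tendsto_zero] at hV ⊢
  have hlim : Tendsto (fun a => 2 * ‖(s a)⁻¹ • w a - V‖ + C * (s a)⁻¹) l (𝓝 0) := by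
    simpa using (hV.const_mul 2).add (hs.inv_tendsto_atTop.const_mul C)
  refine squeeze_zero' (Eventually.of_forall fun _ => norm_nonneg _) ?_ hlim
  filter_upwards [hs.eventually_gt_atTop 0] with a ha
  have hsV : s a • V - w a = s a • (V - (s a)⁻¹ • w a) := by
    rw [smul_sub, smul_inv_smul₀ ha.ne']
  have split : (s a)⁻¹ • G (s a • V) - V = (s a)⁻¹ • (G (s a • V) - G (w a))
      + (s a)⁻¹ • (G (w a) - w a) + ((s a)⁻¹ • w a - V) := by
    simp only [smul_sub]
    abel
  have hinv : 0 ≤ (s a)⁻¹ := inv_nonneg.mpr ha.le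
  have hGV : ‖(s a)⁻¹ • (G (s a • V) - G (w a))‖ ≤ ‖(s a)⁻¹ • w a - V‖ := by
    calc ‖(s a)⁻¹ • (G (s a • V) - G (w a))‖ ≤ (s a)⁻¹ * ‖s a • V - w a‖ := by
          rw [norm_smul, Real.norm_of_nonneg hinv]
          simpa using mul_le_mul_of_nonneg_left (hG.norm_sub_le (s a • V) (w a)) hinv
      _ = ‖(s a)⁻¹ • w a - V‖ := by
          rw [hsV, norm_smul, Real.norm_of_nonneg ha.le, inv_mul_cancel_left₀ ha.ne', norm_sub_rev]
  have hGw : ‖(s a)⁻¹ • (G (w a) - w a)‖ ≤ C * (s a)⁻¹ := by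
    rw [norm_smul, Real.norm_of_nonneg hinv, mul_comm]
    exact mul_le_mul_of_nonneg_right (hw a) hinv
  rw [split]
  linarith [norm_add₃_le (a := (s a)⁻¹ • (G (s a • V) - G (w a)))
    (b := (s a)⁻¹ • (G (w a) - w a)) (c := (s a)⁻¹ • w a - V)]

theorem dH_le_of_forall_sub_le {n : ℕ} {y z : Fin n → ℝ} {M : ℝ} (hM : 0 ≤ M)
    (h : ∀ i j, Real.log (y i / z i) - Real.log (y j / z j) ≤ M) : dH y z ≤ M := by
  rcases isEmpty_or_nonempty (Fin n) with hn | hn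
  · simpa [dH] using hM
  rw [dH, sub_le_iff_le_add]
  refine ciSup_le fun i => ?_
  rw [← sub_le_iff_le_add']
  exact le_ciInf fun j => by linarith [h i j]

noncomputable def logConj {ι : Type*} (f : (ι → ℝ) → ι → ℝ) (u : ι → ℝ) : ι → ℝ :=
  fun i => Real.log (f (fun j => Real.exp (u j)) i)

section LogConj

variable {ι : Type*} {f : (ι → ℝ) → ι → ℝ}

theorem logConj_add_const (hmaps : ∀ x : ι → ℝ, (∀ i, 0 < x i) → ∀ i, 0 < f x i)
    (hhom : ∀ c : ℝ, 0 < c → ∀ x : ι → ℝ, (∀ i, 0 < x i) → f (c • x) = c • f x)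
    (u : ι → ℝ) (c : ℝ) : logConj f (u + fun _ => c) = logConj f u + fun _ => c := by
  have hexp : (fun j => Real.exp (u j + c)) = Real.exp c • fun j => Real.exp (u j) := by
    funext j
    rw [Pi.smul_apply, smul_eq_mul, Real.exp_add, mul_comm]
  funext i
  simp only [logConj, Pi.add_apply]
  rw [hexp, hhom _ (Real.exp_pos c) _ fun _ => Real.exp_pos _, Pi.smul_apply,
    smul_eq_mul, Real.log_mul (Real.exp_ne_zero c) (hmaps _ (fun _ => Real.exp_pos _) i).ne',
    Real.log_exp, add_comm]

theorem monotone_logConj (hmaps : ∀ x : ι → ℝ, (∀ i, 0 < x i) → ∀ i, 0 < f x i)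
    (hmono : ∀ x y : ι → ℝ, (∀ i, 0 < x i) → (∀ i, 0 < y i) → x ≤ y → f x ≤ f y) :
    Monotone (logConj f) := fun _ _ huw i =>
  Real.log_le_log (hmaps _ (fun _ => Real.exp_pos _) i) (hmono _ _ (fun _ => Real.exp_pos _)
    (fun _ => Real.exp_pos _) (fun j => Real.exp_le_exp.mpr (huw j)) i)

theorem norm_logConj_log_sub_log_le [Fintype ι]
    (hmaps : ∀ x : ι → ℝ, (∀ i, 0 < x i) → ∀ i, 0 < f x i) {x : ι → ℝ} (hx : ∀ i, 0 < x i)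
    {lam mu : ℝ} (hlam : 0 < lam) (hmu : 0 < mu) (hlo : mu • x ≤ f x) (hhi : f x ≤ lam • x) :
    ‖logConj f (fun i => Real.log (x i)) - fun i => Real.log (x i)‖ ≤
      max |Real.log mu| |Real.log lam| := by
  refine (pi_norm_le_iff_of_nonneg (by positivity)).mpr fun i => ?_
  have hlo' : Real.log mu + Real.log (x i) ≤ Real.log (f x i) := by
    rw [← Real.log_mul hmu.ne' (hx i).ne']
    exact Real.log_le_log (mul_pos hmu (hx i)) (hlo i)
  have hhi' : Real.log (f x i) ≤ Real.log lam + Real.log (x i) := by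
    rw [← Real.log_mul hlam.ne' (hx i).ne']
    exact Real.log_le_log (hmaps x hx i) (hhi i)
  simp only [logConj, Real.exp_log (hx _), Pi.sub_apply, Real.norm_eq_abs, abs_le]
  constructor <;> linarith [neg_abs_le (Real.log mu), le_abs_self (Real.log lam),
    le_max_left |Real.log mu| |Real.log lam|, le_max_right |Real.log mu| |Real.log lam|]

theorem exp_inv_smul_logConj_natCast_smul (hmaps : ∀ x : ι → ℝ, (∀ i, 0 < x i) → ∀ i, 0 < f x i)
    (V : ι → ℝ) (k : ℕ) (i : ι) :
    Real.exp (((k : ℝ)⁻¹ • logConj f ((k : ℝ) • V)) i) =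
      f (fun j => Real.exp (V j) ^ k) i ^ (k : ℝ)⁻¹ := by
  have hpow : (fun j => Real.exp (((k : ℝ) • V) j)) = fun j => Real.exp (V j) ^ k := by
    funext j
    rw [Pi.smul_apply, smul_eq_mul, Real.exp_nat_mul]
  rw [Pi.smul_apply, smul_eq_mul, logConj, hpow,
    Real.rpow_def_of_pos (hmaps _ (fun _ => pow_pos (Real.exp_pos _) k) i), mul_comm]

theorem recession_eq_self_of_tendsto (hmaps : ∀ x : ι → ℝ, (∀ i, 0 < x i) → ∀ i, 0 < f x i)
    {fhat : (ι → ℝ) → ι → ℝ} {V : ι → ℝ}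
    (hrec : ∀ i, Tendsto (fun k : ℕ => f (fun j => Real.exp (V j) ^ k) i ^ (k : ℝ)⁻¹) atTop
      (𝓝 (fhat (fun j => Real.exp (V j)) i)))
    {k : ℕ → ℕ} (hk : Tendsto k atTop atTop)
    (hV : Tendsto (fun m => (k m : ℝ)⁻¹ • logConj f ((k m : ℝ) • V)) atTop (𝓝 V)) :
    fhat (fun j => Real.exp (V j)) = fun j => Real.exp (V j) := by
  funext i
  refine tendsto_nhds_unique ((hrec i).comp hk) ?_
  have := (Real.continuous_exp.tendsto _).comp ((continuous_apply i).tendsto _ |>.comp hV)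
  exact this.congr fun m => exp_inv_smul_logConj_natCast_smul hmaps V (k m) i

end LogConj

theorem slice_spaces_bounded_of_recession_rigid_general
    (n : ℕ) (f fhat : (Fin n → ℝ) → (Fin n → ℝ))
    (hmaps : ∀ x : Fin n → ℝ, (∀ i, 0 < x i) → ∀ i, 0 < f x i)
    (hhom : ∀ c : ℝ, 0 < c → ∀ x : Fin n → ℝ, (∀ i, 0 < x i) → f (c • x) = c • f x)
    (hmono : ∀ x y : Fin n → ℝ, (∀ i, 0 < x i) → (∀ i, 0 < y i) → x ≤ y → f x ≤ f y)
    -- the recession function exists: `f̂(x) = lim_{k→∞} f(x₁^k, …, xₙ^k)^{1/k}`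
    (hrec : ∀ x : Fin n → ℝ, (∀ i, 0 < x i) → ∀ i : Fin n,
      Tendsto (fun k : ℕ => (f (fun j => x j ^ k) i) ^ ((k : ℝ)⁻¹)) atTop
        (nhds (fhat x i)))
    -- the only eigenvectors of `f̂` in the positive cone are the
    -- positive multiples of the all-ones vector
    (huniq : ∀ x : Fin n → ℝ, (∀ i, 0 < x i) → ∀ lam : ℝ, 0 < lam →
      fhat x = lam • x → ∃ c : ℝ, 0 < c ∧ x = fun _ => c) :
    ∀ lam mu : ℝ, 0 < lam → 0 < mu → ∃ M : ℝ,
      ∀ x y : Fin n → ℝ,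
        (∀ i, 0 < x i) → mu • x ≤ f x → f x ≤ lam • x →
        (∀ i, 0 < y i) → mu • y ≤ f y → f y ≤ lam • y →
        dH x y ≤ M := by
  intro lam mu hlam hmu
  set C := max |Real.log mu| |Real.log lam|
  have hadd := logConj_add_const hmaps hhom
  have hG : LipschitzWith 1 (logConj f) :=
    lipschitzWith_one_of_monotone_of_add_const (monotone_logConj hmaps hmono) hadd
  obtain ⟨M, hM, hspread⟩ :
      ∃ M, 0 ≤ M ∧ ∀ u, ‖logConj f u - u‖ ≤ C → ∀ i j, u i - u j ≤ M := by
    by_contra! hunb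
    have hS : ∀ u ∈ {u | ‖logConj f u - u‖ ≤ C}, ∀ c : ℝ,
        (u + fun _ => c) ∈ {u | ‖logConj f u - u‖ ≤ C} := by
      intro u hu c
      change ‖_ - _‖ ≤ C
      rwa [hadd, add_sub_add_right_eq_sub]
    obtain ⟨w, k, V, i, j, hw, hk, hV, hVij⟩ := exists_tendsto_inv_smul_of_unbounded_spread hS hunb
    have hfix := recession_eq_self_of_tendsto hmaps (hrec _ fun _ => Real.exp_pos _) hk
      (hG.tendsto_inv_smul_apply_smul hw (tendsto_natCast_atTop_iff.mpr hk) hV)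
    obtain ⟨c, -, hc⟩ := huniq _ (fun _ => Real.exp_pos _) 1 one_pos (by rw [hfix, one_smul])
    exact hVij (Real.exp_injective ((congrFun hc i).trans (congrFun hc j).symm))
  have hlog {x : Fin n → ℝ} (hx : ∀ i, 0 < x i) (hlo : mu • x ≤ f x) (hhi : f x ≤ lam • x)
      (i j : Fin n) : Real.log (x i) - Real.log (x j) ≤ M :=
    hspread _ (norm_logConj_log_sub_log_le hmaps hx hlam hmu hlo hhi) i j
  refine ⟨2 * M, fun x y hx hxlo hxhi hy hylo hyhi =>
    dH_le_of_forall_sub_le (by positivity) fun i j => ?_⟩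
  rw [Real.log_div (hx i).ne' (hy i).ne', Real.log_div (hx j).ne' (hy j).ne']
  linarith [hlog hx hxlo hxhi i j, hlog hy hylo hyhi j i]

theorem slice_spaces_bounded_of_recession_rigid
    (n : ℕ) (hn : 0 < n) (f fhat : (Fin n → ℝ) → (Fin n → ℝ))
    (hmaps : ∀ x : Fin n → ℝ, (∀ i, 0 < x i) → ∀ i, 0 < f x i)
    (hhom : ∀ c : ℝ, 0 < c → ∀ x : Fin n → ℝ, (∀ i, 0 < x i) → f (c • x) = c • f x)
    (hmono : ∀ x y : Fin n → ℝ, (∀ i, 0 < x i) → (∀ i, 0 < y i) → x ≤ y → f x ≤ f y)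
    -- the recession function exists: `f̂(x) = lim_{k→∞} f(x₁^k, …, xₙ^k)^{1/k}`
    (hrec : ∀ x : Fin n → ℝ, (∀ i, 0 < x i) → ∀ i : Fin n,
      Tendsto (fun k : ℕ => (f (fun j => x j ^ k) i) ^ ((k : ℝ)⁻¹)) atTop
        (nhds (fhat x i)))
    -- the only eigenvectors of `f̂` in the positive cone are the
    -- positive multiples of the all-ones vector
    (huniq : ∀ x : Fin n → ℝ, (∀ i, 0 < x i) → ∀ lam : ℝ, 0 < lam →
      fhat x = lam • x → ∃ c : ℝ, 0 < c ∧ x = fun _ => c) :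
    ∀ lam mu : ℝ, 0 < lam → 0 < mu → ∃ M : ℝ,
      ∀ x y : Fin n → ℝ,
        (∀ i, 0 < x i) → mu • x ≤ f x → f x ≤ lam • x →
        (∀ i, 0 < y i) → mu • y ≤ f y → f y ≤ lam • y →
        dH x y ≤ M :=
  slice_spaces_bounded_of_recession_rigid_general n f fhat hmaps hhom hmono hrec huniq
end

section
/- Let n be a positive integer and let f : ℝ^n → ℝ^n be a topical function. Then f has an eigenvector in ℝ^n (i.e. there exist v ∈ ℝ^n and h ∈ ℝ with f(v) = v + h·𝟙) if and only if some orbit {f^k(x) : k ∈ ℕ} of f is bounded in the Hilbert semi-norm; moreover, in that case every orbit of f is bounded in the Hilbert semi-norm. -/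
/-- `⊤(x) = max_i x_i`. -/
noncomputable def topV {n : ℕ} (x : Fin n → ℝ) : ℝ := ⨆ i, x i

/-- `⊥(x) = min_i x_i`. -/
noncomputable def botV {n : ℕ} (x : Fin n → ℝ) : ℝ := ⨅ i, x i

/-- The Hilbert semi-norm `‖x‖_H = ⊤(x) - ⊥(x)`. -/
noncomputable def hilbertSN {n : ℕ} (x : Fin n → ℝ) : ℝ := topV x - botV x

/-!
A topical map is `1`-Lipschitz for the sup norm and commutes with adding constants, so it descends
to a nonexpansive map of the tropical projective torus `ℝⁿ / ℝ𝟙`, whose quotient norm is half the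
Hilbert seminorm; eigenvectors of `f` are exactly the fixed points of the descended map. A
nonexpansive map `g` of a finite-dimensional normed space has a fixed point iff some (equivalently
every) orbit is bounded: the fixed points of the contractions `(1 - ε) g + ε x` are approximate
fixed points of `g` in a fixed ball around `x`, and compactness of that ball does the rest.
-/

open Function Set Bornology Metric Filter

section FixedPoint

theorem IsCompact.exists_isFixedPt_of_forall_exists_dist_le {X : Type*} [MetricSpace X]
    {K : Set X} (hK : IsCompact K) {g : X → X} (hg : Continuous g)
    (h : ∀ δ > 0, ∃ y ∈ K, dist (g y) y ≤ δ) : ∃ y ∈ K, IsFixedPt g y := by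
  obtain ⟨y₁, hy₁, -⟩ := h 1 one_pos
  obtain ⟨y, hyK, hmin⟩ := hK.exists_isMinOn ⟨y₁, hy₁⟩ (hg.dist continuous_id).continuousOn
  refine ⟨y, hyK, dist_le_zero.1 (le_of_forall_pos_le_add fun δ hδ => ?_)⟩
  obtain ⟨z, hzK, hz⟩ := h δ hδ
  simpa using (isMinOn_iff.1 hmin z hzK).trans hz

theorem LipschitzWith.isBounded_orbit_of_isFixedPt {X : Type*} [PseudoMetricSpace X]
    {g : X → X} (hg : LipschitzWith 1 g) {y : X} (hy : IsFixedPt g y) (x : X) :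
    IsBounded (range fun k => g^[k] x) := by
  refine (isBounded_closedBall (x := y) (r := dist x y)).subset (range_subset_iff.2 fun k => ?_)
  have := (hg.iterate k).dist_le_mul x y
  rwa [(hy.iterate k).eq, one_pow, NNReal.coe_one, one_mul, ← mem_closedBall] at this

variable {E : Type*} [NormedAddCommGroup E] [NormedSpace ℝ E] {g : E → E}

theorem LipschitzWith.exists_dist_apply_self_le_of_dist_iterate_le [CompleteSpace E]
    (hg : LipschitzWith 1 g) {x : E} {R : ℝ} (hR : ∀ k, dist (g^[k] x) x ≤ R)
    {ε : ℝ} (hε₀ : 0 < ε) (hε₁ : ε ≤ 1) :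
    ∃ y ∈ closedBall x (2 * R), dist (g y) y ≤ ε * (3 * R) := by
  set G : E → E := fun y => (1 - ε) • g y + ε • x with hG_def
  have hG : ContractingWith (1 - ε).toNNReal G := by
    refine ⟨Real.toNNReal_lt_one.2 (by linarith), .of_dist_le_mul fun a b => ?_⟩
    rw [Real.coe_toNNReal _ (by linarith), dist_eq_norm, hG_def, add_sub_add_right_eq_sub,
      ← smul_sub, norm_smul, Real.norm_of_nonneg (by linarith), ← dist_eq_norm]
    gcongr
    simpa using hg.dist_le_mul a b
  have hnear : ∀ k, dist (G^[k] x) (g^[k] x) ≤ R := by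
    intro k
    induction k with
    | zero => simpa using hR 0
    | succ k ih =>
      rw [iterate_succ_apply', iterate_succ_apply']
      calc dist (G (G^[k] x)) (g (g^[k] x))
          = ‖(1 - ε) • (g (G^[k] x) - g (g^[k] x)) + ε • (x - g (g^[k] x))‖ := by
            rw [dist_eq_norm, hG_def]; congr 1; module
        _ ≤ (1 - ε) * dist (G^[k] x) (g^[k] x) + ε * R := by
            refine (norm_add_le _ _).trans (add_le_add ?_ ?_) <;>
              rw [norm_smul, Real.norm_of_nonneg (by linarith), ← dist_eq_norm]
            · gcongr
              simpa using hg.dist_le_mul (G^[k] x) (g^[k] x)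
            · gcongr
              rw [dist_comm, ← iterate_succ_apply' g]
              exact hR (k + 1)
        _ ≤ R := by nlinarith
  set y := ContractingWith.fixedPoint G hG
  have hy : y ∈ closedBall x (2 * R) :=
    isClosed_closedBall.mem_of_tendsto (hG.tendsto_iterate_fixedPoint x) <|
      Eventually.of_forall fun k => by
        rw [mem_closedBall]; linarith [dist_triangle (G^[k] x) (g^[k] x) x, hnear k, hR k]
  refine ⟨y, hy, ?_⟩
  have hGy : G y = y := hG.fixedPoint_isFixedPt
  calc dist (g y) y = ε * dist (g y) x := by
        nth_rewrite 2 [← hGy]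
        rw [dist_eq_norm, dist_eq_norm, hG_def, ← norm_smul_of_nonneg hε₀.le]
        congr 1; module
    _ ≤ ε * (3 * R) := by
        gcongr
        have := hg.dist_le_mul y x
        rw [NNReal.coe_one, one_mul] at this
        linarith [dist_triangle (g y) (g x) x, mem_closedBall.1 hy, iterate_one g ▸ hR 1]

theorem LipschitzWith.exists_isFixedPt_of_isBounded_orbit [ProperSpace E]
    (hg : LipschitzWith 1 g) {x : E} (hx : IsBounded (range fun k => g^[k] x)) :
    ∃ y, IsFixedPt g y := by
  obtain ⟨R, hR⟩ := (isBounded_iff_subset_closedBall x).1 hx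
  have hR' : ∀ k, dist (g^[k] x) x ≤ R := fun k => hR ⟨k, rfl⟩
  have hR₀ : 0 ≤ R := by simpa using hR' 0
  have happrox : ∀ δ > 0, ∃ y ∈ closedBall x (2 * R), dist (g y) y ≤ δ := fun δ hδ => by
    obtain ⟨y, hyK, hy⟩ := hg.exists_dist_apply_self_le_of_dist_iterate_le hR'
      (ε := δ / (3 * R + δ)) (by positivity) (div_le_one_of_le₀ (by linarith) (by positivity))
    refine ⟨y, hyK, hy.trans ?_⟩
    rw [div_mul_eq_mul_div, div_le_iff₀ (by positivity)]
    nlinarith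
  obtain ⟨y, -, hy⟩ :=
    (isCompact_closedBall x (2 * R)).exists_isFixedPt_of_forall_exists_dist_le hg.continuous happrox
  exact ⟨y, hy⟩

end FixedPoint

theorem LipschitzWith.of_semiconj_quotient_mk {M : Type*} [SeminormedAddCommGroup M]
    {S : AddSubgroup M} {f : M → M} {g : M ⧸ S → M ⧸ S} (hf : LipschitzWith 1 f)
    (hfg : Semiconj ((↑) : M → M ⧸ S) f g) : LipschitzWith 1 g := by
  refine .of_dist_le_mul fun a b => ?_
  obtain ⟨x, rfl⟩ := QuotientAddGroup.mk_surjective a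
  rw [NNReal.coe_one, one_mul, dist_eq_norm (a := (x : M ⧸ S)), QuotientAddGroup.le_norm_iff]
  intro m hm
  have hb : ((x - m : M) : M ⧸ S) = b := by rw [QuotientAddGroup.mk_sub, hm, sub_sub_cancel]
  calc dist (g x) (g b) = dist ((f x : M ⧸ S)) (f (x - m)) := by rw [← hb, hfg.eq, hfg.eq]
    _ ≤ dist (f x) (f (x - m)) := by
        rw [dist_eq_norm, dist_eq_norm, ← QuotientAddGroup.mk_sub]
        exact QuotientAddGroup.norm_mk_le_norm
    _ ≤ ‖m‖ := by simpa using hf.dist_le_mul x (x - m)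

section Topical

variable {ι : Type*}

structure IsTopical (f : (ι → ℝ) → (ι → ℝ)) : Prop where
  monotone : Monotone f
  map_add_const : ∀ (x : ι → ℝ) (h : ℝ), f (fun i => x i + h) = fun i => f x i + h

abbrev TropicalProjectiveTorus (ι : Type*) := (ι → ℝ) ⧸ (ℝ ∙ (1 : ι → ℝ))

instance [Fintype ι] : IsClosed ((ℝ ∙ (1 : ι → ℝ) : Submodule ℝ (ι → ℝ)) : Set (ι → ℝ)) :=
  Submodule.closed_of_finiteDimensional _

namespace TropicalProjectiveTorus

theorem mk_eq_mk_iff {x y : ι → ℝ} :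
    (Submodule.Quotient.mk x : TropicalProjectiveTorus ι) = Submodule.Quotient.mk y ↔
      ∃ c : ℝ, x = fun i => y i + c := by
  simp only [Submodule.Quotient.eq, Submodule.mem_span_singleton, funext_iff, Pi.smul_apply,
    Pi.one_apply, smul_eq_mul, mul_one, Pi.sub_apply]
  exact exists_congr fun c => forall_congr' fun i => by constructor <;> intro h <;> linarith

theorem mk_add_const (x : ι → ℝ) (c : ℝ) :
    (Submodule.Quotient.mk (fun i => x i + c) : TropicalProjectiveTorus ι) =
      Submodule.Quotient.mk x :=
  mk_eq_mk_iff.2 ⟨c, rfl⟩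

end TropicalProjectiveTorus

open TropicalProjectiveTorus

namespace IsTopical

variable {f : (ι → ℝ) → (ι → ℝ)}

theorem apply_sub_apply_le [Fintype ι] (hf : IsTopical f) (x y : ι → ℝ) (i : ι) :
    f x i - f y i ≤ dist x y := by
  have hxy : x ≤ fun j => y j + dist x y := fun j => by
    have := dist_le_pi_dist x y j
    rw [Real.dist_eq] at this
    linarith [le_abs_self (x j - y j)]
  have := hf.monotone hxy i
  rw [hf.map_add_const] at this
  linarith

theorem lipschitzWith [Fintype ι] (hf : IsTopical f) : LipschitzWith 1 f :=
  .of_dist_le_mul fun x y => by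
    rw [NNReal.coe_one, one_mul, dist_pi_le_iff dist_nonneg]
    exact fun i => abs_sub_le_iff.2
      ⟨hf.apply_sub_apply_le x y i, dist_comm x y ▸ hf.apply_sub_apply_le y x i⟩

def descend (hf : IsTopical f) : TropicalProjectiveTorus ι → TropicalProjectiveTorus ι :=
  Quotient.lift (fun x => Submodule.Quotient.mk (f x)) fun x y hxy => by
    obtain ⟨c, rfl⟩ := mk_eq_mk_iff.1 (Quotient.sound hxy)
    rw [hf.map_add_const]
    exact mk_add_const _ _

theorem semiconj_descend (hf : IsTopical f) : Semiconj Submodule.Quotient.mk f hf.descend :=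
  fun _ => rfl

theorem lipschitzWith_descend [Fintype ι] (hf : IsTopical f) : LipschitzWith 1 hf.descend :=
  hf.lipschitzWith.of_semiconj_quotient_mk hf.semiconj_descend

theorem isFixedPt_descend_mk_iff (hf : IsTopical f) (v : ι → ℝ) :
    IsFixedPt hf.descend (Submodule.Quotient.mk v) ↔ ∃ h : ℝ, f v = fun i => v i + h :=
  mk_eq_mk_iff

theorem exists_isFixedPt_descend_iff (hf : IsTopical f) :
    (∃ y, IsFixedPt hf.descend y) ↔ ∃ (v : ι → ℝ) (h : ℝ), f v = fun i => v i + h := by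
  simp only [(Submodule.Quotient.mk_surjective _).exists, hf.isFixedPt_descend_mk_iff]

end IsTopical

end Topical

section Hilbert

open TropicalProjectiveTorus

theorem le_topV {n : ℕ} (x : Fin n → ℝ) (i : Fin n) : x i ≤ topV x :=
  le_ciSup (finite_range x).bddAbove i

theorem botV_le {n : ℕ} (x : Fin n → ℝ) (i : Fin n) : botV x ≤ x i :=
  ciInf_le (finite_range x).bddBelow i

variable {n : ℕ} [NeZero n]

theorem hilbertSN_add_const (x : Fin n → ℝ) (c : ℝ) :
    hilbertSN (fun i => x i + c) = hilbertSN x := by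
  rw [hilbertSN, hilbertSN, topV, botV, ← ciSup_add (finite_range x).bddAbove,
    ← ciInf_add (finite_range x).bddBelow, topV, botV]
  ring

theorem hilbertSN_le_two_mul_norm (x : Fin n → ℝ) : hilbertSN x ≤ 2 * ‖x‖ := by
  have htop : topV x ≤ ‖x‖ := ciSup_le fun i => (le_abs_self _).trans (norm_le_pi_norm x i)
  have hbot : -‖x‖ ≤ botV x := le_ciInf fun i => neg_le.1 <|
    (neg_le_abs (x i)).trans (norm_le_pi_norm x i)
  rw [hilbertSN]
  linarith

theorem norm_sub_const_le_half_hilbertSN (x : Fin n → ℝ) :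
    ‖fun i => x i + -((topV x + botV x) / 2)‖ ≤ hilbertSN x / 2 := by
  have htop (i) := le_topV x i
  have hbot (i) := botV_le x i
  rw [hilbertSN, pi_norm_le_iff_of_nonneg (by linarith [htop 0, hbot 0])]
  exact fun i => abs_le.2 ⟨by linarith [hbot i], by linarith [htop i]⟩

theorem hilbertSN_eq_two_mul_norm_mk (x : Fin n → ℝ) :
    hilbertSN x = 2 * ‖(Submodule.Quotient.mk x : TropicalProjectiveTorus (Fin n))‖ := by
  refine le_antisymm ?_ ?_
  · suffices hilbertSN x / 2 ≤ ‖(Submodule.Quotient.mk x : TropicalProjectiveTorus (Fin n))‖ by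
      linarith
    refine QuotientAddGroup.le_norm_iff.2 fun m hm => ?_
    obtain ⟨c, rfl⟩ := mk_eq_mk_iff.1 hm
    linarith [hilbertSN_le_two_mul_norm (fun i => x i + c), hilbertSN_add_const x c]
  · rw [← mk_add_const x (-((topV x + botV x) / 2))]
    linarith [Submodule.Quotient.norm_mk_le (ℝ ∙ (1 : Fin n → ℝ))
      (fun i => x i + -((topV x + botV x) / 2)), norm_sub_const_le_half_hilbertSN x]

theorem IsTopical.isBounded_orbit_descend_iff {f : (Fin n → ℝ) → (Fin n → ℝ)} (hf : IsTopical f)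
    (x : Fin n → ℝ) :
    IsBounded (range fun k => hf.descend^[k] (Submodule.Quotient.mk x)) ↔
      ∃ M : ℝ, ∀ k : ℕ, hilbertSN (f^[k] x) ≤ M := by
  simp only [isBounded_iff_forall_norm_le, forall_mem_range,
    ← (hf.semiconj_descend.iterate_right _).eq, hilbertSN_eq_two_mul_norm_mk]
  constructor
  · rintro ⟨C, hC⟩
    exact ⟨2 * C, fun k => by linarith [hC k]⟩
  · rintro ⟨M, hM⟩
    exact ⟨M / 2, fun k => by linarith [hM k]⟩

end Hilbert

theorem eigenvector_iff_bounded_orbit_additive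
    (n : ℕ) (hn : 0 < n) (f : (Fin n → ℝ) → (Fin n → ℝ))
    (htop : ∀ (x : Fin n → ℝ) (h : ℝ), f (fun i => x i + h) = fun i => f x i + h)
    (hmono : Monotone f) :
    ((∃ (v : Fin n → ℝ) (h : ℝ), f v = fun i => v i + h) ↔
      ∃ x : Fin n → ℝ, ∃ M : ℝ, ∀ k : ℕ, hilbertSN (f^[k] x) ≤ M) ∧
    ((∃ (v : Fin n → ℝ) (h : ℝ), f v = fun i => v i + h) →
      ∀ x : Fin n → ℝ, ∃ M : ℝ, ∀ k : ℕ, hilbertSN (f^[k] x) ≤ M) := by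
  have : NeZero n := ⟨hn.ne'⟩
  have hf : IsTopical f := ⟨hmono, htop⟩
  have hg := hf.lipschitzWith_descend
  simp only [← hf.exists_isFixedPt_descend_iff, ← hf.isBounded_orbit_descend_iff]
  refine ⟨⟨fun ⟨y, hy⟩ => ⟨0, hg.isBounded_orbit_of_isFixedPt hy _⟩,
    fun ⟨x, hx⟩ => hg.exists_isFixedPt_of_isBounded_orbit hx⟩,
    fun ⟨y, hy⟩ x => hg.isBounded_orbit_of_isFixedPt hy _⟩
end
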